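/- arXiv:2007.01527 — 2 statements merged into one kernel-verified Lean document; each statement's English description precedes it below -/
import Mathlib

section
/- For every λ ∈ ℝ, lim_{ε→0⁺} (ε/π^{3/2}) · ∫_{−∞}^{λ} ( ∫_ℝ e^{−s²} / ((t−s)² + ε²) ds ) dt = π^{−1/2} · ∫_{−∞}^{λ} e^{−s²} ds. (This identity computes, via Stone's formula, the vacuum spectral resolution ⟨Φ, E_λ Φ⟩ = π^{−1/2} ∫_{−∞}^{λ} e^{−s²} ds of the position operator X, where E_λ is the spectral resolution of X and Φ(x) = π^{−1/4} e^{−x²/2} is the vacuum vector.) -/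
/-!
The statement holds for every integrable `f` in place of `exp (-s²)`. Integrating the Poisson
kernel in `t` first (Fubini) gives
`∫_{t ≤ λ} ((t - s)² + ε²)⁻¹ dt = (arctan ((λ - s) / ε) + π / 2) / ε`, so `ε / π` times the double
integral is `∫ f s · (arctan ((λ - s) / ε) + π / 2) / π ds`. As `ε → 0⁺` the factor tends, boundedly,
to the indicator of `s ≤ λ` for every `s ≠ λ`, and dominated convergence gives `∫_{s ≤ λ} f`.
For `f s = exp (-s²)` the remaining constant is `π^{-1/2}`.
-/

open Real Filter MeasureTheory Set Topology

lemma integrable_inv_sub_sq_add_sq (s : ℝ) {ε : ℝ} (hε : ε ≠ 0) :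
    Integrable (fun t : ℝ => ((t - s) ^ 2 + ε ^ 2)⁻¹) := by
  have hscaled : Integrable (fun t : ℝ => (1 + ((t - s) * ε⁻¹) ^ 2)⁻¹) := by
    simpa using (integrable_inv_one_add_sq.comp_mul_right' (inv_ne_zero hε)).comp_sub_right s
  refine (hscaled.const_mul (ε⁻¹ ^ 2)).congr (Eventually.of_forall fun t => ?_)
  field_simp
  ring

lemma integral_Iic_inv_sub_sq_add_sq (lam s : ℝ) {ε : ℝ} (hε : 0 < ε) :
    ∫ t in Iic lam, ((t - s) ^ 2 + ε ^ 2)⁻¹ = (arctan ((lam - s) / ε) + π / 2) / ε := by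
  have hderiv : ∀ t ∈ Iic lam,
      HasDerivAt (fun t => arctan ((t - s) / ε) / ε) ((t - s) ^ 2 + ε ^ 2)⁻¹ t := by
    intro t _
    have hlin : HasDerivAt (fun t : ℝ => (t - s) / ε) ε⁻¹ t := by
      simpa [div_eq_mul_inv] using ((hasDerivAt_id t).sub_const s).div_const ε
    refine (((hasDerivAt_arctan _).comp t hlin).div_const ε).congr_deriv ?_
    field_simp
    ring
  have hbot : Tendsto (fun t => arctan ((t - s) / ε) / ε) atBot (𝓝 (-(π / 2) / ε)) := by
    have hlin : Tendsto (fun t : ℝ => (t - s) / ε) atBot atBot :=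
      (tendsto_atBot_add_const_right _ (-s) tendsto_id).atBot_div_const hε
    exact ((tendsto_nhds_of_tendsto_nhdsWithin tendsto_arctan_atBot).comp hlin).div_const ε
  rw [integral_Iic_of_hasDerivAt_of_tendsto' hderiv
    (integrable_inv_sub_sq_add_sq s hε.ne').integrableOn hbot]
  ring

lemma arctan_add_pi_div_two_mem_Icc (x : ℝ) : arctan x + π / 2 ∈ Icc 0 π := by
  constructor <;> linarith [neg_pi_div_two_lt_arctan x, arctan_lt_pi_div_two x]

lemma tendsto_arctan_div_add_pi_div_two {x : ℝ} (hx : x ≠ 0) :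
    Tendsto (fun ε => arctan (x / ε) + π / 2) (𝓝[>] 0) (𝓝 ((Ici 0).indicator (fun _ => π) x)) := by
  rcases hx.lt_or_gt with hneg | hpos
  · have hdiv : Tendsto (fun ε => x / ε) (𝓝[>] 0) atBot := by
      simpa only [div_eq_mul_inv] using
        (tendsto_const_mul_atBot_of_neg hneg).2 tendsto_inv_nhdsGT_zero
    rw [indicator_of_notMem (show x ∉ Ici 0 from not_le.2 hneg)]
    simpa using ((tendsto_nhds_of_tendsto_nhdsWithin tendsto_arctan_atBot).comp hdiv).add_const
      (π / 2)
  · have hdiv : Tendsto (fun ε => x / ε) (𝓝[>] 0) atTop := by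
      simpa only [div_eq_mul_inv] using tendsto_inv_nhdsGT_zero.const_mul_atTop hpos
    rw [indicator_of_mem (mem_Ici.2 hpos.le)]
    simpa [add_halves] using
      ((tendsto_nhds_of_tendsto_nhdsWithin tendsto_arctan_atTop).comp hdiv).add_const (π / 2)

lemma integral_Iic_integral_div_sub_sq_add_sq {f : ℝ → ℝ} (hf : Integrable f) (lam : ℝ)
    {ε : ℝ} (hε : 0 < ε) :
    ∫ t in Iic lam, ∫ s, f s / ((t - s) ^ 2 + ε ^ 2) =
      ∫ s, f s * ((arctan ((lam - s) / ε) + π / 2) / ε) := by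
  have hkernel : Continuous (fun p : ℝ × ℝ => ((p.1 - p.2) ^ 2 + ε ^ 2)⁻¹) :=
    (by fun_prop : Continuous fun p : ℝ × ℝ => (p.1 - p.2) ^ 2 + ε ^ 2).inv₀ fun p => by positivity
  have hnorm : ∀ s, ∫ t in Iic lam, ‖f s / ((t - s) ^ 2 + ε ^ 2)‖ =
      ‖f s‖ * ((arctan ((lam - s) / ε) + π / 2) / ε) := by
    intro s
    rw [← integral_Iic_inv_sub_sq_add_sq lam s hε, ← integral_const_mul]
    refine setIntegral_congr_fun measurableSet_Iic fun t _ => ?_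
    rw [norm_div, Real.norm_of_nonneg (by positivity : (0 : ℝ) ≤ (t - s) ^ 2 + ε ^ 2),
      div_eq_mul_inv]
  have hint : Integrable (Function.uncurry fun t s => f s / ((t - s) ^ 2 + ε ^ 2))
      ((volume.restrict (Iic lam)).prod volume) := by
    refine (integrable_prod_iff' ?_).2 ⟨Eventually.of_forall fun s => ?_, ?_⟩
    · exact hf.aestronglyMeasurable.comp_snd.mul hkernel.aestronglyMeasurable
    · simpa only [Function.uncurry_apply_pair, div_eq_mul_inv] using
        ((integrable_inv_sub_sq_add_sq s hε.ne').integrableOn (s := Iic lam)).const_mul (f s)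
    · simp only [Function.uncurry_apply_pair, hnorm]
      refine (hf.norm.mul_const (π / ε)).mono ?_ (Eventually.of_forall fun s => ?_)
      · exact hf.norm.aestronglyMeasurable.mul (by fun_prop : Continuous _).aestronglyMeasurable
      · obtain ⟨hlo, hhi⟩ := arctan_add_pi_div_two_mem_Icc ((lam - s) / ε)
        rw [norm_mul, norm_mul, norm_norm]
        gcongr
        rw [Real.norm_of_nonneg (by positivity), Real.norm_of_nonneg (by positivity)]
        gcongr
  rw [integral_integral_swap hint]
  refine integral_congr_ae (Eventually.of_forall fun s => ?_)
  dsimp only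
  rw [← integral_Iic_inv_sub_sq_add_sq lam s hε, ← integral_const_mul]
  simp only [div_eq_mul_inv]

lemma tendsto_integral_mul_arctan_div_add_pi_div_two {f : ℝ → ℝ} (hf : Integrable f) (lam : ℝ) :
    Tendsto (fun ε => ∫ s, f s * (arctan ((lam - s) / ε) + π / 2)) (𝓝[>] 0)
      (𝓝 (π * ∫ s in Iic lam, f s)) := by
  have hlim : ∀ s, f s * (Ici 0).indicator (fun _ => π) (lam - s) =
      (Iic lam).indicator (fun s => π * f s) s := by
    intro s
    by_cases hs : s ≤ lam <;> simp [hs, mul_comm]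
  rw [← integral_const_mul, ← integral_indicator measurableSet_Iic]
  simp_rw [← hlim]
  refine tendsto_integral_filter_of_dominated_convergence (fun s => π * ‖f s‖)
    (Eventually.of_forall fun ε => ?_) (Eventually.of_forall fun ε => ?_)
    (hf.norm.const_mul π) ?_
  · exact hf.aestronglyMeasurable.mul (by fun_prop : Continuous _).aestronglyMeasurable
  · refine Eventually.of_forall fun s => ?_
    obtain ⟨hlo, hhi⟩ := arctan_add_pi_div_two_mem_Icc ((lam - s) / ε)
    rw [norm_mul, Real.norm_of_nonneg hlo, mul_comm π]
    gcongr
  · filter_upwards [Measure.ae_ne volume lam] with s hs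
    exact (tendsto_arctan_div_add_pi_div_two (sub_ne_zero.2 hs.symm)).const_mul (f s)

theorem tendsto_mul_integral_Iic_integral_div_sub_sq_add_sq {f : ℝ → ℝ} (hf : Integrable f)
    (lam : ℝ) :
    Tendsto (fun ε => ε / π * ∫ t in Iic lam, ∫ s, f s / ((t - s) ^ 2 + ε ^ 2)) (𝓝[>] 0)
      (𝓝 (∫ s in Iic lam, f s)) := by
  have hlim := (tendsto_integral_mul_arctan_div_add_pi_div_two hf lam).const_mul π⁻¹
  rw [inv_mul_cancel_left₀ pi_ne_zero] at hlim
  refine hlim.congr' ?_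
  filter_upwards [self_mem_nhdsWithin] with ε (hε : 0 < ε)
  rw [integral_Iic_integral_div_sub_sq_add_sq hf lam hε]
  simp_rw [mul_div_assoc', integral_div]
  generalize ∫ s, f s * (arctan ((lam - s) / ε) + π / 2) = I
  field_simp

/-- Stone's formula computes the vacuum spectral resolution of the position
operator `X`:
`lim_{ε→0⁺} (ε/π^{3/2}) ∫_{−∞}^{λ} ∫ℝ e^{−s²}/((t−s)²+ε²) ds dt = π^{−1/2} ∫_{−∞}^{λ} e^{−s²} ds`. -/
theorem stmt_14 (lam : ℝ) :
    Filter.Tendsto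
      (fun ε : ℝ =>
        ε / Real.pi ^ ((3 : ℝ) / 2) *
          ∫ t in Set.Iic lam, ∫ s : ℝ, Real.exp (-s ^ 2) / ((t - s) ^ 2 + ε ^ 2))
      (nhdsWithin 0 (Set.Ioi 0))
      (nhds (Real.pi ^ (-(1 / 2 : ℝ)) * ∫ s in Set.Iic lam, Real.exp (-s ^ 2))) := by
  have hpow : π ^ ((3 : ℝ) / 2) = π ^ (1 / 2 : ℝ) * π := by
    rw [← rpow_add_one pi_ne_zero]
    norm_num
  have hgauss : Integrable fun s : ℝ => exp (-s ^ 2) := by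
    simpa using integrable_exp_neg_mul_sq one_pos
  convert (tendsto_mul_integral_Iic_integral_div_sub_sq_add_sq hgauss lam).const_mul
    (π ^ (-(1 / 2 : ℝ))) using 2 with ε
  rw [hpow, rpow_neg pi_pos.le]
  ring
end

section
/- Let a ∈ ℂ with Im a > 0 and let g : ℝ → ℂ be continuous and bounded. Define G : ℝ → ℂ by G(s) = −i ∫_{−∞}^{s} e^{i((t²−s²)/2 − a(t−s))} g(t) dt (the integral converges absolutely since the integrand has modulus e^{Im a·(t−s)}|g(t)|). Then G is differentiable and satisfies (a − s)·G(s) + i·G′(s) = g(s) for every s ∈ ℝ; that is, G = R(a;X+P)g solves the resolvent equation (a − X − P)G = g for the operator X + P, where X is multiplication by x and P = −i d/dx. -/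
open Complex MeasureTheory Set

/-!
Writing `φ(t) = i (t²/2 − a t)`, the integrand factors as `e^{−φ(s)} · e^{φ(t)} g(t)`, so
`G = −i e^{−φ} F` with `F(s) = ∫_{−∞}^{s} e^{φ(t)} g(t) dt`. Since `|e^{φ(t)}| = e^{Im a · t}`, the
integral converges, `F′ = e^{φ} g` by the fundamental theorem of calculus, and the product rule
(variation of constants) gives `G′ = −φ′ G − i g` with `φ′(s) = i (s − a)`, which is the
resolvent equation.
-/

theorem integrableOn_Iic_of_norm_le_exp {E : Type*} [NormedAddCommGroup E] {f : ℝ → E}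
    (hf : AEStronglyMeasurable f) {b C : ℝ} (hb : 0 < b)
    (hbound : ∀ t, ‖f t‖ ≤ C * Real.exp (b * t)) (s : ℝ) : IntegrableOn f (Iic s) :=
  ((integrableOn_exp_mul_Iic hb s).const_mul C).mono' hf.restrict (ae_of_all _ hbound)

theorem hasDerivAt_integral_Iic {E : Type*} [NormedAddCommGroup E] [NormedSpace ℝ E]
    [CompleteSpace E] {f : ℝ → E} (hf : Continuous f) (hint : ∀ s, IntegrableOn f (Iic s))
    (s : ℝ) : HasDerivAt (fun u => ∫ t in Iic u, f t) (f s) s := by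
  have hsplit (u : ℝ) : ∫ t in Iic u, f t = (∫ t in Iic 0, f t) + ∫ t in (0 : ℝ)..u, f t := by
    rw [← intervalIntegral.integral_Iic_sub_Iic (hint 0) (hint u), add_sub_cancel]
  have hftc : HasDerivAt (fun u => ∫ t in (0 : ℝ)..u, f t) (f s) s :=
    intervalIntegral.integral_hasDerivAt_right (hf.intervalIntegrable 0 s)
      (hf.stronglyMeasurableAtFilter _ _) hf.continuousAt
  exact (hftc.const_add _).congr_of_eventuallyEq (Filter.Eventually.of_forall hsplit)

theorem hasDerivAt_exp_neg_mul_integral_Iic {φ φ' g : ℝ → ℂ} (hφ : ∀ s, HasDerivAt φ (φ' s) s)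
    (hg : Continuous g) (hint : ∀ s, IntegrableOn (fun t => exp (φ t) * g t) (Iic s)) (s : ℝ) :
    HasDerivAt (fun u => exp (-φ u) * ∫ t in Iic u, exp (φ t) * g t)
      (-φ' s * (exp (-φ s) * ∫ t in Iic s, exp (φ t) * g t) + g s) s := by
  have hφc : Continuous φ := continuous_iff_continuousAt.2 fun u => (hφ u).continuousAt
  have hF := hasDerivAt_integral_Iic (by fun_prop) hint s
  refine ((hφ s).neg.cexp.mul hF).congr_deriv ?_
  have hexp : exp (-φ s) * exp (φ s) = 1 := by rw [← exp_add, neg_add_cancel, exp_zero]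
  simp only [Pi.neg_apply]
  linear_combination g s * hexp

theorem hasDerivAt_quadratic_phase (a : ℂ) (s : ℝ) :
    HasDerivAt (fun t : ℝ => I * ((t : ℂ) ^ 2 / 2 - a * t)) (I * (s - a)) s := by
  have ht : HasDerivAt (fun t : ℝ => (t : ℂ)) 1 s := (hasDerivAt_id s).ofReal_comp
  refine ((((ht.pow 2).div_const 2).sub (ht.const_mul a)).const_mul I).congr_deriv ?_
  norm_num

theorem norm_exp_quadratic_phase_mul_le {a : ℂ} {g : ℝ → ℂ} {C : ℝ} (hC : ∀ x, ‖g x‖ ≤ C)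
    (t : ℝ) : ‖exp (I * ((t : ℂ) ^ 2 / 2 - a * t)) * g t‖ ≤ C * Real.exp (a.im * t) := by
  have hre : (I * ((t : ℂ) ^ 2 / 2 - a * t)).re = a.im * t := by
    simp [mul_re, mul_im, ← ofReal_pow]
  rw [norm_mul, norm_exp, hre, mul_comm C]
  exact mul_le_mul_of_nonneg_left (hC t) (Real.exp_pos _).le

/-- for `Im a > 0` and continuous bounded `g`, the function
`G(s) = −i ∫_{−∞}^{s} e^{i((t²−s²)/2 − a(t−s))} g(t) dt` is differentiable and solves the
resolvent equation `(a − X − P)G = g` for `X + P` (`X` multiplication by `x`,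
`P = −i d/dx`), i.e. `(a − s)·G(s) + i·G′(s) = g(s)` for all `s`. -/
theorem stmt_17 (a : ℂ) (ha : 0 < a.im) (g : ℝ → ℂ) (hg : Continuous g)
    (hbdd : ∃ C : ℝ, ∀ x : ℝ, ‖g x‖ ≤ C) (G : ℝ → ℂ)
    (hG : ∀ s : ℝ,
      G s = -Complex.I * ∫ t in Set.Iic s,
        Complex.exp (Complex.I * (((t : ℂ) ^ 2 - (s : ℂ) ^ 2) / 2 - a * ((t : ℂ) - s))) * g t) :
    Differentiable ℝ G ∧ ∀ s : ℝ, (a - s) * G s + Complex.I * deriv G s = g s := by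
  obtain ⟨C, hC⟩ := hbdd
  set φ : ℝ → ℂ := fun t => I * ((t : ℂ) ^ 2 / 2 - a * t)
  have hint : ∀ s, IntegrableOn (fun t => exp (φ t) * g t) (Iic s) :=
    integrableOn_Iic_of_norm_le_exp (by fun_prop) ha (norm_exp_quadratic_phase_mul_le hC)
  have hGH : G = fun s => -I * (exp (-φ s) * ∫ t in Iic s, exp (φ t) * g t) := funext fun s => by
    rw [hG s, ← integral_const_mul (exp (-φ s))]
    congr 1
    refine setIntegral_congr_fun measurableSet_Iic fun t _ => ?_
    rw [← mul_assoc, ← exp_add]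
    congr 2
    simp only [φ]
    ring
  have hG' (s : ℝ) : HasDerivAt G
      (-I * (-(I * (s - a)) * (exp (-φ s) * ∫ t in Iic s, exp (φ t) * g t) + g s)) s :=
    hGH ▸ (hasDerivAt_exp_neg_mul_integral_Iic (hasDerivAt_quadratic_phase a) hg hint s).const_mul _
  refine ⟨fun s => (hG' s).differentiableAt, fun s => ?_⟩
  rw [(hG' s).deriv, hGH]
  linear_combination (I * (s - a) * (exp (-φ s) * ∫ t in Iic s, exp (φ t) * g t) - g s) * I_mul_I
end
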